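/- arXiv:1912.12445 — 2 statements merged into one kernel-verified Lean document; each statement's English description precedes it below -/
import Mathlib

section
/- Let H be the operator on formal power series extracting even-index terms: H(∑ aₙqⁿ) = ∑ a_{2n} q^{2n}. Then H(φ(q)²/φ(-q)) = -3φ(q⁴) + 4φ(q⁴)³/φ(-q²)², where φ(q) = ∑_{n∈ℤ} q^{n²}. -/
/-- `phi` is Ramanujan's theta function `φ(q) = ∑_{k ∈ ℤ} q^{k²}`. -/
noncomputable def phi : PowerSeries ℚ :=
  PowerSeries.mk fun m =>
    (((Finset.Icc (-(m : ℤ)) (m : ℤ)).filter (fun k => k ^ 2 = (m : ℤ))).card : ℚ)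

/-- `psi` is Ramanujan's theta function `ψ(q) = ∑_{k ≥ 0} q^{k(k+1)/2}`. -/
noncomputable def psi : PowerSeries ℚ :=
  PowerSeries.mk fun m =>
    (((Finset.range (m + 1)).filter (fun k => k * (k + 1) = 2 * m)).card : ℚ)

/-- `sub c k f` is the substitution `f(c·qᵏ)` of a formal power series. -/
noncomputable def sub (c : ℚ) (k : ℕ) (f : PowerSeries ℚ) : PowerSeries ℚ :=
  PowerSeries.mk fun m =>
    if k ∣ m then c ^ (m / k) * PowerSeries.coeff (m / k) f else 0

/-- The huffing operator `H`, extracting even-index terms of a power series. -/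
noncomputable def Hop (f : PowerSeries ℚ) : PowerSeries ℚ :=
  PowerSeries.mk fun n => if Even n then PowerSeries.coeff n f else 0

namespace Huff

open PowerSeries Finset

noncomputable abbrev σ : PowerSeries ℚ →+* PowerSeries ℚ := PowerSeries.rescale (-1 : ℚ)

lemma sigma_sigma (f : PowerSeries ℚ) : σ (σ f) = f := by
  rw [rescale_rescale]; norm_num [rescale_one]

lemma sub_neg_one_one (f : PowerSeries ℚ) : sub (-1) 1 f = σ f := by
  ext m
  simp [sub, coeff_rescale, coeff_mk]

lemma Hop_eq (f : PowerSeries ℚ) : Hop f = PowerSeries.C (1/2) * (f + σ f) := by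
  ext n
  rw [Hop, coeff_mk, coeff_C_mul, map_add, coeff_rescale]
  rcases Nat.even_or_odd n with h | h
  · rw [if_pos h, h.neg_one_pow]; ring
  · rw [if_neg (Nat.not_even_iff_odd.mpr h), h.neg_one_pow]; ring

lemma constCoeff_phi : PowerSeries.constantCoeff phi = 1 := by
  rw [← coeff_zero_eq_constantCoeff]
  simp [phi, coeff_mk]
  decide

noncomputable abbrev A : PowerSeries ℚ := sub 1 4 phi
noncomputable abbrev P : PowerSeries ℚ := sub 1 8 psi
noncomputable abbrev B : PowerSeries ℚ := 2 * PowerSeries.X * P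
noncomputable abbrev W : PowerSeries ℚ := sub (-1) 2 phi


open PowerSeries Finset

noncomputable def Sq (n : ℕ) : Finset ℤ := (Finset.Icc (-(n : ℤ)) (n : ℤ)).filter (fun k => k ^ 2 = (n : ℤ))
noncomputable def Sq2 (n : ℕ) : Finset ℤ := (Finset.Icc (-(n : ℤ)) (n : ℤ)).filter (fun k => 2 * k ^ 2 = (n : ℤ))
def Tri (n : ℕ) : Finset ℕ := (Finset.range (n + 1)).filter (fun k => k * (k + 1) = 2 * n)

lemma Icc_mem_of_sq_le {k : ℤ} {n : ℕ} (h : k ^ 2 ≤ (n : ℤ)) : k ∈ Finset.Icc (-(n : ℤ)) (n : ℤ) := by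
  rw [Finset.mem_Icc, ← abs_le]
  rcases eq_or_ne k 0 with rfl | hk
  · simpa using Int.ofNat_nonneg n
  · have h2 : 1 ≤ |k| := Int.one_le_abs hk
    nlinarith [sq_abs k]

lemma mem_Sq {n : ℕ} {k : ℤ} : k ∈ Sq n ↔ k ^ 2 = (n : ℤ) := by
  constructor
  · exact fun h => (Finset.mem_filter.mp h).2
  · intro h
    exact Finset.mem_filter.mpr ⟨Icc_mem_of_sq_le h.le, h⟩

lemma mem_Sq2 {n : ℕ} {k : ℤ} : k ∈ Sq2 n ↔ 2 * k ^ 2 = (n : ℤ) := by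
  constructor
  · exact fun h => (Finset.mem_filter.mp h).2
  · intro h
    refine Finset.mem_filter.mpr ⟨Icc_mem_of_sq_le ?_, h⟩
    nlinarith [sq_nonneg k]

lemma mem_Tri {n : ℕ} {k : ℕ} : k ∈ Tri n ↔ k * (k + 1) = 2 * n := by
  constructor
  · exact fun h => (Finset.mem_filter.mp h).2
  · intro h
    refine Finset.mem_filter.mpr ⟨Finset.mem_range.mpr ?_, h⟩
    by_contra hc
    push_neg at hc
    nlinarith

lemma coeff_phi (n : ℕ) : PowerSeries.coeff n phi = ((Sq n).card : ℚ) := by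
  rw [phi, coeff_mk]; rfl

lemma coeff_psi (n : ℕ) : PowerSeries.coeff n psi = ((Tri n).card : ℚ) := by
  rw [psi, coeff_mk]; rfl

noncomputable def eps (k : ℤ) : ℚ := if Even k then 1 else -1

lemma eps_add (a b : ℤ) : eps (a + b) = eps a * eps b := by
  unfold eps
  by_cases ha : Even a <;> by_cases hb : Even b <;>
    simp [Int.even_add, ha, hb]

lemma eps_neg (a : ℤ) : eps (-a) = eps a := by simp [eps]

lemma eps_sub (a b : ℤ) : eps (a - b) = eps a * eps b := by
  rw [sub_eq_add_neg, eps_add, eps_neg]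

lemma even_of_sq {k : ℤ} {n : ℕ} (h : k ^ 2 = (n : ℤ)) (hn : Even n) : Even k := by
  have h2 : Even (k ^ 2) := by rw [h]; exact_mod_cast hn
  exact (Int.even_pow.mp h2).1

lemma odd_of_sq {k : ℤ} {n : ℕ} (h : k ^ 2 = (n : ℤ)) (hn : Odd n) : ¬ Even k := by
  intro hk
  have h2 : Even (k ^ 2) := Int.even_pow.mpr ⟨hk, by norm_num⟩
  rw [h, Int.even_coe_nat] at h2
  exact (Nat.not_even_iff_odd.mpr hn) h2

lemma eps_eq_of_sq {n : ℕ} {k : ℤ} (h : k ^ 2 = (n : ℤ)) : eps k = (-1 : ℚ) ^ n := by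
  rcases Nat.even_or_odd n with hn | hn
  · rw [hn.neg_one_pow]
    simp [eps, even_of_sq h hn]
  · rw [hn.neg_one_pow]
    simp [eps, odd_of_sq h hn]

lemma sum_eps_Sq (n : ℕ) : ∑ k ∈ Sq n, eps k = (-1 : ℚ) ^ n * ((Sq n).card : ℚ) := by
  rw [Finset.sum_congr rfl (fun k hk => eps_eq_of_sq (mem_Sq.mp hk)), Finset.sum_const,
    nsmul_eq_mul]
  ring


open PowerSeries Finset

lemma coeff_sigma_phi (n : ℕ) : PowerSeries.coeff n (σ phi) = ∑ k ∈ Sq n, eps k := by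
  rw [coeff_rescale, coeff_phi, sum_eps_Sq]

lemma Sq2_eq (m : ℕ) : Sq2 (2 * m) = Sq m := by
  ext k
  rw [mem_Sq, mem_Sq2]
  push_cast
  constructor <;> intro h <;> linarith

lemma Sq2_empty {n : ℕ} (h : ¬ 2 ∣ n) : Sq2 n = ∅ := by
  rw [Finset.eq_empty_iff_forall_notMem]
  intro k hk
  rw [mem_Sq2] at hk
  exact h (by exact_mod_cast (Dvd.intro _ hk : (2:ℤ) ∣ (n:ℤ)))

lemma coeff_sub (c : ℚ) (k : ℕ) (f : PowerSeries ℚ) (n : ℕ) :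
    PowerSeries.coeff n (sub c k f)
      = if k ∣ n then c ^ (n / k) * PowerSeries.coeff (n / k) f else 0 :=
  PowerSeries.coeff_mk _ _

lemma coeff_W (n : ℕ) : PowerSeries.coeff n W = ∑ k ∈ Sq2 n, eps k := by
  rw [coeff_sub]
  by_cases h : 2 ∣ n
  · obtain ⟨m, rfl⟩ := h
    rw [if_pos ⟨m, rfl⟩]
    have hm : 2 * m / 2 = m := by omega
    rw [hm, Sq2_eq, coeff_phi]
    rw [Finset.sum_congr rfl (fun k hk => eps_eq_of_sq (mem_Sq.mp hk)), Finset.sum_const,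
      nsmul_eq_mul]
    ring
  · rw [if_neg h, Sq2_empty h, Finset.sum_empty]

noncomputable def SS (n : ℕ) : Finset (ℤ × ℤ) :=
  ((Finset.Icc (-(n : ℤ)) (n : ℤ)) ×ˢ (Finset.Icc (-(n : ℤ)) (n : ℤ))).filter
    (fun p => p.1 ^ 2 + p.2 ^ 2 = (n : ℤ))

noncomputable def TT (n : ℕ) : Finset (ℤ × ℤ) :=
  ((Finset.Icc (-(n : ℤ)) (n : ℤ)) ×ˢ (Finset.Icc (-(n : ℤ)) (n : ℤ))).filter
    (fun p => 2 * p.1 ^ 2 + 2 * p.2 ^ 2 = (n : ℤ))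

lemma mem_SS {n : ℕ} {p : ℤ × ℤ} : p ∈ SS n ↔ p.1 ^ 2 + p.2 ^ 2 = (n : ℤ) := by
  constructor
  · exact fun h => (Finset.mem_filter.mp h).2
  · intro h
    refine Finset.mem_filter.mpr ⟨Finset.mem_product.mpr ⟨?_, ?_⟩, h⟩ <;>
      [exact Icc_mem_of_sq_le (by nlinarith [sq_nonneg p.2]);
       exact Icc_mem_of_sq_le (by nlinarith [sq_nonneg p.1])]

lemma mem_TT {n : ℕ} {p : ℤ × ℤ} : p ∈ TT n ↔ 2 * p.1 ^ 2 + 2 * p.2 ^ 2 = (n : ℤ) := by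
  constructor
  · exact fun h => (Finset.mem_filter.mp h).2
  · intro h
    refine Finset.mem_filter.mpr ⟨Finset.mem_product.mpr ⟨?_, ?_⟩, h⟩ <;>
      [exact Icc_mem_of_sq_le (by nlinarith [sq_nonneg p.1, sq_nonneg p.2]);
       exact Icc_mem_of_sq_le (by nlinarith [sq_nonneg p.1, sq_nonneg p.2])]

lemma biUnion_SS (n : ℕ) :
    (Finset.HasAntidiagonal.antidiagonal n).biUnion (fun q => Sq q.1 ×ˢ Sq q.2) = SS n := by
  ext p
  simp only [Finset.mem_biUnion, Finset.mem_product, Finset.HasAntidiagonal.mem_antidiagonal, mem_SS, mem_Sq,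
    Prod.exists]
  constructor
  · rintro ⟨i, j, hij, h1, h2⟩
    rw [h1, h2, ← Nat.cast_add, hij]
  · intro h
    refine ⟨(p.1 ^ 2).toNat, (p.2 ^ 2).toNat, ?_, ?_, ?_⟩
    · have e1 := Int.toNat_of_nonneg (sq_nonneg p.1)
      have e2 := Int.toNat_of_nonneg (sq_nonneg p.2)
      have : (((p.1 ^ 2).toNat + (p.2 ^ 2).toNat : ℕ) : ℤ) = (n : ℤ) := by
        push_cast [e1, e2]; linarith
      exact_mod_cast this
    · rw [Int.toNat_of_nonneg (sq_nonneg p.1)]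
    · rw [Int.toNat_of_nonneg (sq_nonneg p.2)]

lemma biUnion_TT (n : ℕ) :
    (Finset.HasAntidiagonal.antidiagonal n).biUnion (fun q => Sq2 q.1 ×ˢ Sq2 q.2) = TT n := by
  ext p
  simp only [Finset.mem_biUnion, Finset.mem_product, Finset.HasAntidiagonal.mem_antidiagonal, mem_TT, mem_Sq2,
    Prod.exists]
  constructor
  · rintro ⟨i, j, hij, h1, h2⟩
    rw [h1, h2, ← Nat.cast_add, hij]
  · intro h
    refine ⟨(2 * p.1 ^ 2).toNat, (2 * p.2 ^ 2).toNat, ?_, ?_, ?_⟩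
    · have e1 := Int.toNat_of_nonneg (by positivity : (0:ℤ) ≤ 2 * p.1 ^ 2)
      have e2 := Int.toNat_of_nonneg (by positivity : (0:ℤ) ≤ 2 * p.2 ^ 2)
      have : (((2 * p.1 ^ 2).toNat + (2 * p.2 ^ 2).toNat : ℕ) : ℤ) = (n : ℤ) := by
        push_cast [e1, e2]; linarith
      exact_mod_cast this
    · rw [Int.toNat_of_nonneg (by positivity : (0:ℤ) ≤ 2 * p.1 ^ 2)]
    · rw [Int.toNat_of_nonneg (by positivity : (0:ℤ) ≤ 2 * p.2 ^ 2)]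

lemma disj_Sq (n : ℕ) :
    (↑(Finset.HasAntidiagonal.antidiagonal n) : Set (ℕ × ℕ)).PairwiseDisjoint
      (fun q => Sq q.1 ×ˢ Sq q.2) := by
  intro q hq q' hq' hne
  simp only [Function.onFun]
  rw [Finset.disjoint_left]
  intro p hp hp'
  rw [Finset.mem_product, mem_Sq, mem_Sq] at hp hp'
  apply hne
  have h1 : (q.1 : ℤ) = (q'.1 : ℤ) := by rw [← hp.1, hp'.1]
  have h2 : (q.2 : ℤ) = (q'.2 : ℤ) := by rw [← hp.2, hp'.2]
  exact Prod.ext (by exact_mod_cast h1) (by exact_mod_cast h2)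

lemma disj_Sq2 (n : ℕ) :
    (↑(Finset.HasAntidiagonal.antidiagonal n) : Set (ℕ × ℕ)).PairwiseDisjoint
      (fun q => Sq2 q.1 ×ˢ Sq2 q.2) := by
  intro q hq q' hq' hne
  simp only [Function.onFun]
  rw [Finset.disjoint_left]
  intro p hp hp'
  rw [Finset.mem_product, mem_Sq2, mem_Sq2] at hp hp'
  apply hne
  have h1 : (q.1 : ℤ) = (q'.1 : ℤ) := by rw [← hp.1, hp'.1]
  have h2 : (q.2 : ℤ) = (q'.2 : ℤ) := by rw [← hp.2, hp'.2]
  exact Prod.ext (by exact_mod_cast h1) (by exact_mod_cast h2)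

lemma coeff_phi_sigma (n : ℕ) :
    PowerSeries.coeff n (phi * σ phi) = ∑ p ∈ SS n, eps p.2 := by
  rw [PowerSeries.coeff_mul, ← biUnion_SS, Finset.sum_biUnion (disj_Sq n)]
  refine Finset.sum_congr rfl fun q _ => ?_
  rw [coeff_phi, coeff_sigma_phi, Finset.sum_product]
  dsimp only
  rw [Finset.sum_const, nsmul_eq_mul]

lemma coeff_W_W (n : ℕ) :
    PowerSeries.coeff n (W * W) = ∑ p ∈ TT n, eps p.1 * eps p.2 := by
  rw [PowerSeries.coeff_mul, ← biUnion_TT, Finset.sum_biUnion (disj_Sq2 n)]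
  refine Finset.sum_congr rfl fun q _ => ?_
  rw [coeff_W, coeff_W, Finset.sum_mul_sum, Finset.sum_product]

lemma core (n : ℕ) : ∑ p ∈ SS n, eps p.2 = ∑ p ∈ TT n, eps p.1 * eps p.2 := by
  rcases Nat.even_or_odd n with hn | hn
  · obtain ⟨m, rfl⟩ := hn
    refine (Finset.sum_nbij' (i := fun p : ℤ × ℤ => (p.1 + p.2, p.1 - p.2))
      (j := fun p : ℤ × ℤ => ((p.1 + p.2) / 2, (p.1 - p.2) / 2)) ?_ ?_ ?_ ?_ ?_).symm
    · intro p hp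
      rw [mem_TT] at hp
      rw [mem_SS]
      push_cast at hp ⊢
      ring_nf
      ring_nf at hp
      linarith
    · intro p hp
      rw [mem_SS] at hp
      have hpar : Even (p.1 + p.2) := by
        rcases Int.even_or_odd p.1 with h1 | h1 <;> rcases Int.even_or_odd p.2 with h2 | h2
        · exact h1.add h2
        · exfalso
          have : Odd (p.1 ^ 2 + p.2 ^ 2) :=
            (Int.even_pow.mpr ⟨h1, by norm_num⟩).add_odd (h2.pow)
          rw [hp] at this
          have hev : Even ((m + m : ℕ) : ℤ) := by push_cast; exact ⟨m, by ring⟩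
          exact (Int.not_even_iff_odd.mpr this) hev
        · exfalso
          have : Odd (p.1 ^ 2 + p.2 ^ 2) :=
            Odd.add_even (h1.pow) (Int.even_pow.mpr ⟨h2, by norm_num⟩)
          rw [hp] at this
          have hev : Even ((m + m : ℕ) : ℤ) := by push_cast; exact ⟨m, by ring⟩
          exact (Int.not_even_iff_odd.mpr this) hev
        · exact h1.add_odd h2
      obtain ⟨u, hu⟩ := hpar
      rw [mem_TT]
      dsimp only
      have e1 : (p.1 + p.2) / 2 = u := by omega
      have e2 : (p.1 - p.2) / 2 = u - p.2 := by omega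
      rw [e1, e2]
      have hp1 : p.1 = 2 * u - p.2 := by omega
      rw [hp1] at hp
      push_cast at hp ⊢
      nlinarith [hp]
    · intro p hp
      dsimp only
      have h1 : (p.1 + p.2 + (p.1 - p.2)) / 2 = p.1 := by omega
      have h2 : (p.1 + p.2 - (p.1 - p.2)) / 2 = p.2 := by omega
      rw [h1, h2]
    · intro p hp
      rw [mem_SS] at hp
      have hpar : Even (p.1 + p.2) := by
        rcases Int.even_or_odd p.1 with h1 | h1 <;> rcases Int.even_or_odd p.2 with h2 | h2
        · exact h1.add h2
        · exfalso
          have : Odd (p.1 ^ 2 + p.2 ^ 2) :=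
            (Int.even_pow.mpr ⟨h1, by norm_num⟩).add_odd (h2.pow)
          rw [hp] at this
          have hev : Even ((m + m : ℕ) : ℤ) := by push_cast; exact ⟨m, by ring⟩
          exact (Int.not_even_iff_odd.mpr this) hev
        · exfalso
          have : Odd (p.1 ^ 2 + p.2 ^ 2) :=
            Odd.add_even (h1.pow) (Int.even_pow.mpr ⟨h2, by norm_num⟩)
          rw [hp] at this
          have hev : Even ((m + m : ℕ) : ℤ) := by push_cast; exact ⟨m, by ring⟩
          exact (Int.not_even_iff_odd.mpr this) hev
        · exact h1.add_odd h2
      obtain ⟨u, hu⟩ := hpar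
      dsimp only
      have e1 : (p.1 + p.2) / 2 = u := by omega
      have e2 : (p.1 - p.2) / 2 = p.1 - u := by omega
      rw [e1, e2, Prod.ext_iff]
      constructor
      · show u + (p.1 - u) = p.1
        ring
      · show u - (p.1 - u) = p.2
        omega
    · intro p hp
      dsimp only
      rw [eps_sub]
  · have hTT : TT n = ∅ := by
      rw [Finset.eq_empty_iff_forall_notMem]
      intro p hp
      rw [mem_TT] at hp
      have : (2:ℤ) ∣ (n : ℤ) := ⟨p.1 ^ 2 + p.2 ^ 2, by linarith⟩
      have h2 : 2 ∣ n := by exact_mod_cast this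
      rcases hn with ⟨c, rfl⟩
      omega
    rw [hTT, Finset.sum_empty]
    apply Finset.sum_involution (g := fun p _ => (p.2, p.1))
    · intro p hp
      rw [mem_SS] at hp
      dsimp only
      have hne : ¬ (Even p.1 ↔ Even p.2) := by
        intro hiff
        have hev : Even (p.1 ^ 2 + p.2 ^ 2) := by
          rcases Int.even_or_odd p.1 with h1 | h1
          · exact (Int.even_pow.mpr ⟨h1, by norm_num⟩).add
              (Int.even_pow.mpr ⟨hiff.mp h1, by norm_num⟩)
          · have h2 : Odd p.2 := by
              rcases Int.even_or_odd p.2 with h2 | h2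
              · exact absurd (hiff.mpr h2) (Int.not_even_iff_odd.mpr h1)
              · exact h2
            exact h1.pow.add_odd h2.pow
        rw [hp, Int.even_coe_nat] at hev
        exact (Nat.not_even_iff_odd.mpr hn) hev
      unfold eps
      by_cases h1 : Even p.1 <;> by_cases h2 : Even p.2 <;>
        simp [h1, h2] at hne ⊢ <;> tauto
    · intro p hp hne
      rw [mem_SS] at hp
      intro hcontra
      have h12 : p.2 = p.1 := congrArg Prod.fst hcontra
      have hd : ((n : ℤ)) = 2 * p.1 ^ 2 := by rw [← hp, h12]; ring
      have hd2 : (2:ℤ) ∣ (n : ℤ) := ⟨p.1 ^ 2, hd⟩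
      have hd3 : 2 ∣ n := by exact_mod_cast hd2
      rcases hn with ⟨c, rfl⟩
      omega
    · intro p hp
      rw [mem_SS] at hp ⊢
      dsimp only
      linarith
    · intro p hp
      rfl


open PowerSeries Finset

lemma coeff_A (m : ℕ) :
    PowerSeries.coeff m A = if 4 ∣ m then ((Sq (m / 4)).card : ℚ) else 0 := by
  rw [coeff_sub]
  by_cases h : 4 ∣ m
  · rw [if_pos h, if_pos h, one_pow, one_mul, coeff_phi]
  · rw [if_neg h, if_neg h]

lemma coeff_B (m : ℕ) :
    PowerSeries.coeff m B = if m % 8 = 1 then 2 * ((Tri ((m - 1) / 8)).card : ℚ) else 0 := by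
  have hB : (B : PowerSeries ℚ) = PowerSeries.C 2 * (PowerSeries.X * P) := by
    rw [map_ofNat]; ring
  rw [hB, PowerSeries.coeff_C_mul]
  cases m with
  | zero => rw [PowerSeries.coeff_zero_X_mul]; norm_num
  | succ j =>
    rw [PowerSeries.coeff_succ_X_mul, coeff_sub]
    by_cases h : 8 ∣ j
    · obtain ⟨t, rfl⟩ := h
      have h1 : (8 * t + 1) % 8 = 1 := by omega
      have h2 : (8 * t + 1 - 1) / 8 = t := by omega
      have h3 : 8 * t / 8 = t := by omega
      rw [if_pos ⟨t, rfl⟩, if_pos h1, h2, h3, one_pow, one_mul, coeff_psi]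
    · rw [if_neg h, if_neg (by omega : ¬ (j + 1) % 8 = 1), mul_zero]

lemma card_Sq_four (t : ℕ) : (Sq (4 * t)).card = (Sq t).card := by
  apply Finset.card_nbij' (i := fun k => k / 2) (j := fun k => 2 * k)
  · intro k hk
    simp only [Finset.mem_coe] at hk ⊢
    rw [mem_Sq] at hk ⊢
    have hev : Even k := even_of_sq hk ⟨2 * t, by ring⟩
    obtain ⟨c, hc⟩ := hev
    have hc2 : k / 2 = c := by omega
    rw [hc2]
    rw [hc] at hk
    push_cast at hk ⊢
    have hk' : c ^ 2 * 4 = (t : ℤ) * 4 := by linear_combination hk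
    linarith
  · intro k hk
    simp only [Finset.mem_coe] at hk ⊢
    rw [mem_Sq] at hk ⊢
    push_cast at hk ⊢
    nlinarith [hk]
  · intro k hk
    simp only [Finset.mem_coe] at hk ⊢
    rw [mem_Sq] at hk
    have hev : Even k := even_of_sq hk ⟨2 * t, by ring⟩
    obtain ⟨c, hc⟩ := hev
    omega
  · intro k hk
    dsimp only
    omega

lemma Sq_even_empty {m : ℕ} (h2 : 2 ∣ m) (h4 : ¬ 4 ∣ m) : Sq m = ∅ := by
  rw [Finset.eq_empty_iff_forall_notMem]
  intro k hk
  rw [mem_Sq] at hk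
  have hev : Even k := even_of_sq hk (by obtain ⟨c, rfl⟩ := h2; exact ⟨c, by ring⟩)
  obtain ⟨c, hc⟩ := hev
  have : (4 : ℤ) ∣ (m : ℤ) := ⟨c ^ 2, by rw [← hk, hc]; ring⟩
  exact h4 (by exact_mod_cast this)

lemma Sq_odd_empty {m : ℕ} (hodd : m % 2 = 1) (h8 : ¬ m % 8 = 1) : Sq m = ∅ := by
  rw [Finset.eq_empty_iff_forall_notMem]
  intro k hk
  rw [mem_Sq] at hk
  have hko : Odd k := Int.not_even_iff_odd.mp (odd_of_sq hk (Nat.odd_iff.mpr hodd))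
  obtain ⟨c, hc⟩ := hko
  have hcc : Even (c * (c + 1)) := Int.even_mul_succ_self c
  obtain ⟨d, hd⟩ := hcc
  have hm : (m : ℤ) = 8 * d + 1 := by rw [← hk, hc]; nlinarith [hd]
  omega

lemma card_Sq_odd (t : ℕ) : (Sq (8 * t + 1)).card = 2 * (Tri t).card := by
  have hsplit := Finset.card_filter_add_card_filter_not
    (s := Sq (8 * t + 1)) (fun k : ℤ => 0 < k)
  have hneg : ((Sq (8 * t + 1)).filter (fun k => ¬ 0 < k)).card
      = ((Sq (8 * t + 1)).filter (fun k => 0 < k)).card := by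
    apply Finset.card_nbij' (i := fun k => -k) (j := fun k => -k)
    · intro k hk
      simp only [Finset.mem_coe] at hk ⊢
      rw [Finset.mem_filter, mem_Sq] at hk ⊢
      obtain ⟨hsq, hnp⟩ := hk
      have hk0 : k ≠ 0 := by
        intro h
        rw [h] at hsq
        norm_num at hsq
        omega
      exact ⟨by rw [neg_sq]; exact hsq, by omega⟩
    · intro k hk
      simp only [Finset.mem_coe] at hk ⊢
      rw [Finset.mem_filter, mem_Sq] at hk ⊢
      exact ⟨by rw [neg_sq]; exact hk.1, by omega⟩
    · intro k _; simp
    · intro k _; simp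
  have hpos : ((Sq (8 * t + 1)).filter (fun k => 0 < k)).card = (Tri t).card := by
    refine Finset.card_nbij' (fun k => ((k - 1) / 2).toNat)
      (fun u => 2 * (u : ℤ) + 1) ?_ ?_ ?_ ?_
    · intro k hk
      simp only [Finset.mem_coe] at hk ⊢
      rw [Finset.mem_filter, mem_Sq] at hk
      obtain ⟨hk2, hk1⟩ := hk
      have hko : Odd k := Int.not_even_iff_odd.mp (odd_of_sq hk2 ⟨4 * t, by ring⟩)
      obtain ⟨c, hc⟩ := hko
      have hc0 : 0 ≤ c := by omega
      rw [mem_Tri]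
      have hcn : (((k - 1) / 2).toNat : ℤ) = c := by omega
      have key : c * (c + 1) = 2 * (t : ℤ) := by
        rw [hc] at hk2
        push_cast at hk2
        nlinarith [hk2]
      have : ((((k - 1) / 2).toNat * (((k - 1) / 2).toNat + 1) : ℕ) : ℤ) = ((2 * t : ℕ) : ℤ) := by
        push_cast [hcn]
        linarith [key]
      exact_mod_cast this
    · intro u hu
      simp only [Finset.mem_coe] at hu ⊢
      rw [mem_Tri] at hu
      rw [Finset.mem_filter, mem_Sq]
      constructor
      · have : ((2 * (u : ℤ) + 1) ^ 2) = ((8 * t + 1 : ℕ) : ℤ) := by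
          push_cast
          have : ((u : ℤ) * ((u : ℤ) + 1)) = 2 * t := by exact_mod_cast hu
          nlinarith [this]
        exact this
      · positivity
    · intro k hk
      simp only [Finset.mem_coe] at hk
      rw [Finset.mem_filter, mem_Sq] at hk
      obtain ⟨hk2, hk1⟩ := hk
      have hko : Odd k := Int.not_even_iff_odd.mp (odd_of_sq hk2 ⟨4 * t, by ring⟩)
      obtain ⟨c, hc⟩ := hko
      dsimp only
      omega
    · intro u _
      dsimp only
      omega
  omega

lemma phi_split : phi = A + B := by
  ext m
  rw [map_add, coeff_phi, coeff_A, coeff_B]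
  by_cases h4 : 4 ∣ m
  · rw [if_pos h4, if_neg (by omega : ¬ m % 8 = 1), add_zero]
    obtain ⟨t, rfl⟩ := h4
    have : 4 * t / 4 = t := by omega
    rw [this, card_Sq_four]
  · rw [if_neg h4]
    rcases Nat.even_or_odd m with he | ho
    · obtain ⟨c, rfl⟩ := he
      rw [if_neg (by omega : ¬ (c + c) % 8 = 1), Sq_even_empty (by omega : 2 ∣ (c + c)) h4]
      simp
    · by_cases h8 : m % 8 = 1
      · rw [if_pos h8]
        have hm : m = 8 * ((m - 1) / 8) + 1 := by omega
        rw [show (Sq m) = Sq (8 * ((m - 1) / 8) + 1) from by rw [← hm]]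
        rw [card_Sq_odd]
        push_cast
        ring
      · rw [if_neg h8, Sq_odd_empty (Nat.odd_iff.mp ho) h8]
        simp

lemma sigma_A : σ A = A := by
  ext m
  rw [coeff_rescale, coeff_A]
  by_cases h : 4 ∣ m
  · have hev : Even m := by obtain ⟨c, rfl⟩ := h; exact ⟨2 * c, by ring⟩
    rw [hev.neg_one_pow, one_mul]
  · rw [if_neg h, mul_zero]

lemma sigma_B : σ B = -B := by
  ext m
  rw [coeff_rescale, map_neg, coeff_B]
  by_cases h : m % 8 = 1
  · have hodd : Odd m := by rw [Nat.odd_iff]; omega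
    rw [hodd.neg_one_pow, if_pos h]
    ring
  · rw [if_neg h, mul_zero, neg_zero]

lemma key : phi * σ phi = W ^ 2 := by
  ext n
  rw [pow_two, coeff_phi_sigma, coeff_W_W, core]


lemma sigma_phi : σ phi = A - B := by
  rw [phi_split, map_add, sigma_A, sigma_B]; ring

lemma constCoeff_sigma_phi : PowerSeries.constantCoeff (σ phi) = 1 := by
  rw [← coeff_zero_eq_constantCoeff, coeff_rescale]
  simp [coeff_zero_eq_constantCoeff, constCoeff_phi]

lemma constCoeff_W : PowerSeries.constantCoeff W = 1 := by
  rw [← coeff_zero_eq_constantCoeff]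
  simp [sub, coeff_mk, coeff_zero_eq_constantCoeff, constCoeff_phi]

lemma sigma_inv (g : PowerSeries ℚ) (h : PowerSeries.constantCoeff g ≠ 0) :
    σ g⁻¹ = (σ g)⁻¹ := by
  have h2 : PowerSeries.constantCoeff (σ g) ≠ 0 := by
    rw [← coeff_zero_eq_constantCoeff, coeff_rescale]
    simpa [coeff_zero_eq_constantCoeff] using h
  rw [PowerSeries.eq_inv_iff_mul_eq_one h2, ← map_mul,
    PowerSeries.inv_mul_cancel _ h, map_one]

end Huff

/-- `H(φ(q)²/φ(-q)) = -3 φ(q⁴) + 4 φ(q⁴)³ / φ(-q²)²`. -/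
theorem huffing_phi_identity :
    Hop (phi ^ 2 * (sub (-1) 1 phi)⁻¹)
      = -3 * sub 1 4 phi + 4 * (sub 1 4 phi) ^ 3 * ((sub (-1) 2 phi) ^ 2)⁻¹ := by
  open Huff PowerSeries in
  have hΦ : constantCoeff phi = 1 := Huff.constCoeff_phi
  have hΨ : constantCoeff (Huff.σ phi) = 1 := Huff.constCoeff_sigma_phi
  have hΦ0 : phi ≠ 0 := fun h => by simp [h] at hΦ
  have hΨ0 : (Huff.σ phi) ≠ 0 := fun h => by simp [h] at hΨ
  have hΦinv : phi * phi⁻¹ = 1 := PowerSeries.mul_inv_cancel _ (by rw [hΦ]; norm_num)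
  have hΨinv : Huff.σ phi * (Huff.σ phi)⁻¹ = 1 :=
    PowerSeries.mul_inv_cancel _ (by rw [hΨ]; norm_num)
  have hWinv : Huff.W ^ 2 * (Huff.W ^ 2)⁻¹ = 1 := by
    refine PowerSeries.mul_inv_cancel _ ?_
    rw [map_pow, Huff.constCoeff_W]; norm_num
  rw [Huff.sub_neg_one_one]
  have hσ : Huff.σ (phi ^ 2 * (Huff.σ phi)⁻¹) = (Huff.σ phi) ^ 2 * phi⁻¹ := by
    rw [map_mul, map_pow, Huff.sigma_inv _ (by rw [hΨ]; norm_num), Huff.sigma_sigma]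
  have hhalf : (PowerSeries.C (1/2 : ℚ)) * 2 = 1 := by
    rw [show (2 : PowerSeries ℚ) = PowerSeries.C (2 : ℚ) from by rw [map_ofNat], ← map_mul]
    norm_num
  have h1 : phi = Huff.A + Huff.B := Huff.phi_split
  have h2 : Huff.σ phi = Huff.A - Huff.B := Huff.sigma_phi
  have h3 : phi * Huff.σ phi = Huff.W ^ 2 := Huff.key
  apply mul_right_cancel₀ (b := phi * Huff.σ phi) (mul_ne_zero hΦ0 hΨ0)
  rw [Huff.Hop_eq, hσ]
  have lhs_eq : PowerSeries.C (1/2) * (phi ^ 2 * (Huff.σ phi)⁻¹ + (Huff.σ phi) ^ 2 * phi⁻¹)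
      * (phi * Huff.σ phi) = Huff.A ^ 3 + 3 * Huff.A * Huff.B ^ 2 := by
    calc PowerSeries.C (1/2) * (phi ^ 2 * (Huff.σ phi)⁻¹ + (Huff.σ phi) ^ 2 * phi⁻¹)
        * (phi * Huff.σ phi)
        = PowerSeries.C (1/2) * (phi ^ 3 * (Huff.σ phi * (Huff.σ phi)⁻¹)
            + (Huff.σ phi) ^ 3 * (phi * phi⁻¹)) := by ring
      _ = (PowerSeries.C (1/2) * 2) * (Huff.A ^ 3 + 3 * Huff.A * Huff.B ^ 2) := by
            rw [hΨinv, hΦinv, h2, h1]; ring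
      _ = Huff.A ^ 3 + 3 * Huff.A * Huff.B ^ 2 := by rw [hhalf, one_mul]
  have rhs_eq : (-3 * Huff.A + 4 * Huff.A ^ 3 * (Huff.W ^ 2)⁻¹) * (phi * Huff.σ phi)
      = Huff.A ^ 3 + 3 * Huff.A * Huff.B ^ 2 := by
    calc (-3 * Huff.A + 4 * Huff.A ^ 3 * (Huff.W ^ 2)⁻¹) * (phi * Huff.σ phi)
        = -3 * Huff.A * (phi * Huff.σ phi)
            + 4 * Huff.A ^ 3 * (Huff.W ^ 2 * (Huff.W ^ 2)⁻¹) := by rw [h3]; ring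
      _ = Huff.A ^ 3 + 3 * Huff.A * Huff.B ^ 2 := by rw [hWinv, h2, h1]; ring
  rw [lhs_eq, rhs_eq]
end

section
/- Let p be an odd prime and write ψ(q) = ∑_{n≥0} a(n) qⁿ with a(n) the number of representations of n as a triangular number, i.e., a(n) = #{k ≥ 0 : k(k+1)/2 = n}. Then for every α ≥ 0: (i) ∑_{n≥0} a(p^{2α} n + (p^{2α}-1)/8) qⁿ = ψ(q), i.e., a(p^{2α} n + (p^{2α}-1)/8) = a(n) for all n ≥ 0; (ii) a(p^{2α+2} n + ((8i+p)p^{2α+1} - 1)/8) = 0 for all n ≥ 0 and i ∈ {1,…,p-1}; (iii) a(p^{2α+1} n + ((8j+1)p^{2α} - 1)/8) = 0 for all n ≥ 0 whenever 0 ≤ j ≤ p-1 and 8j+1 is a quadratic nonresidue modulo p. -/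
def a (n : ℕ) : ℕ := ((Finset.range (2 * n + 2)).filter (fun k => k * (k + 1) = 2 * n)).card

lemma a_eq_one (n k : ℕ) (hk : k * (k + 1) = 2 * n) : a n = 1 := by
  unfold a
  rw [Finset.card_eq_one]
  refine ⟨k, ?_⟩
  ext j
  simp only [Finset.mem_filter, Finset.mem_range, Finset.mem_singleton]
  constructor
  · rintro ⟨-, hj⟩
    rcases lt_trichotomy j k with h | h | h
    · nlinarith
    · exact h
    · nlinarith
  · rintro rfl
    exact ⟨by nlinarith, hk⟩

lemma a_eq_zero (n : ℕ) (h : ∀ k, k * (k + 1) ≠ 2 * n) : a n = 0 := by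
  unfold a
  rw [Finset.card_eq_zero, Finset.filter_eq_empty_iff]
  intro k _
  exact h k

lemma tri_iff (n : ℕ) : (∃ k, k * (k + 1) = 2 * n) ↔ IsSquare (8 * n + 1) := by
  constructor
  · rintro ⟨k, hk⟩; exact ⟨2 * k + 1, by nlinarith⟩
  · rintro ⟨m, hm⟩
    have hm' : Odd m := by
      rcases Nat.even_or_odd m with he | ho
      · exfalso
        have : Even (m * m) := he.mul_right m
        rw [← hm] at this
        obtain ⟨r, hr⟩ := this
        omega
      · exact ho
    obtain ⟨k, rfl⟩ := hm'
    exact ⟨k, by nlinarith⟩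

lemma a_char (n : ℕ) : a n = if IsSquare (8 * n + 1) then 1 else 0 := by
  by_cases h : IsSquare (8 * n + 1)
  · rw [if_pos h]
    obtain ⟨k, hk⟩ := (tri_iff n).2 h
    exact a_eq_one n k hk
  · rw [if_neg h]
    exact a_eq_zero n (fun k hk => h ((tri_iff n).1 ⟨k, hk⟩))

lemma isSquare_sq_mul (s t : ℕ) (hs : s ≠ 0) : IsSquare (s ^ 2 * t) ↔ IsSquare t := by
  constructor
  · rintro ⟨m, hm⟩
    have hdvd : s ∣ m := by
      have h2 : s ^ 2 ∣ m ^ 2 := ⟨t, by rw [pow_two]; exact hm.symm⟩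
      exact (Nat.pow_dvd_pow_iff (by norm_num)).1 h2
    obtain ⟨u, rfl⟩ := hdvd
    refine ⟨u, ?_⟩
    have hs2 : 0 < s ^ 2 := by positivity
    apply Nat.eq_of_mul_eq_mul_left hs2
    rw [hm]; ring
  · rintro ⟨u, rfl⟩
    exact ⟨s * u, by ring⟩

lemma not_isSquare_odd_val (p : ℕ) (hp : p.Prime) (e M : ℕ) (he : Odd e)
    (hM : ¬ p ∣ M) (hM0 : 0 < M) : ¬ IsSquare (p ^ e * M) := by
  rintro ⟨m, hm⟩
  have hm0 : m ≠ 0 := by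
    intro h
    rw [h, mul_zero] at hm
    exact (Nat.mul_pos (pow_pos hp.pos e) hM0).ne' hm
  have h1 : (p ^ e * M).factorization p = e := by
    rw [Nat.factorization_mul (pow_ne_zero e hp.pos.ne') hM0.ne',
      Nat.Prime.factorization_pow hp]
    simp [Nat.factorization_eq_zero_of_not_dvd hM]
  have h2 : (m * m).factorization p = 2 * m.factorization p := by
    rw [Nat.factorization_mul hm0 hm0]
    simp [two_mul]
  rw [hm, h2] at h1
  obtain ⟨c, hc⟩ := he
  omega

lemma not_isSquare_of_zmod (p N : ℕ) (h : ¬ IsSquare ((N : ZMod p))) : ¬ IsSquare N := by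
  rintro ⟨m, hm⟩
  exact h ⟨m, by exact_mod_cast congrArg (Nat.cast : ℕ → ZMod p) hm⟩

lemma eight_dvd_pow (p α : ℕ) (hodd : Odd p) : 8 ∣ p ^ (2 * α) - 1 := by
  obtain ⟨m, rfl⟩ := hodd
  obtain ⟨t, ht⟩ := Nat.even_mul_succ_self m
  have h8 : 8 ∣ (2 * m + 1) ^ 2 - 1 := by
    have hP : (2 * m + 1) ^ 2 = 8 * t + 1 := by nlinarith
    rw [hP]
    simp
  have hdvd : (2 * m + 1) ^ 2 - 1 ∣ ((2 * m + 1) ^ 2) ^ α - 1 ^ α :=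
    Nat.sub_dvd_pow_sub_pow _ _ _
  rw [one_pow, ← pow_mul] at hdvd
  exact h8.trans hdvd

lemma p_not_dvd_eight_mul (p i : ℕ) (hp : p.Prime) (hodd : Odd p)
    (hi1 : 1 ≤ i) (hi2 : i ≤ p - 1) : ¬ p ∣ 8 * i := by
  intro h
  rcases (Nat.Prime.dvd_mul hp).mp h with h8 | hi
  · have hp2 : p = 2 := by
      have : p ∣ 2 ^ 3 := by norm_num; exact h8
      have := hp.dvd_of_dvd_pow this
      exact (Nat.prime_dvd_prime_iff_eq hp Nat.prime_two).mp this
    obtain ⟨m, hm⟩ := hodd; omega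
  · have := Nat.le_of_dvd (by omega) hi
    have := hp.two_le
    omega

/-- Dissection properties of the coefficients of `ψ(q)` for an odd prime `p`. -/
theorem psi_coeff_dissection (p : ℕ) (hp : p.Prime) (hodd : Odd p) (α : ℕ) :
    (∀ n : ℕ, a (p ^ (2 * α) * n + (p ^ (2 * α) - 1) / 8) = a n) ∧
    (∀ n : ℕ, ∀ i : ℕ, 1 ≤ i → i ≤ p - 1 →
      a (p ^ (2 * α + 2) * n + ((8 * i + p) * p ^ (2 * α + 1) - 1) / 8) = 0) ∧
    (∀ n : ℕ, ∀ j : ℕ, j ≤ p - 1 → ¬ IsSquare (((8 * j + 1 : ℕ) : ZMod p)) →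
      a (p ^ (2 * α + 1) * n + ((8 * j + 1) * p ^ (2 * α) - 1) / 8) = 0) := by
  refine ⟨?_, ?_, ?_⟩
  · -- Part (i)
    intro n
    obtain ⟨t, ht⟩ := eight_dvd_pow p α hodd
    have hP1 : 1 ≤ p ^ (2 * α) := Nat.one_le_pow _ _ hp.pos
    have key : 8 * (p ^ (2 * α) * n + (p ^ (2 * α) - 1) / 8) + 1
        = p ^ (2 * α) * (8 * n + 1) := by
      have h1 : p ^ (2 * α) * (8 * n + 1) = 8 * (p ^ (2 * α) * n) + p ^ (2 * α) := by ring
      omega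
    have hsq : p ^ (2 * α) = (p ^ α) ^ 2 := by rw [← pow_mul, mul_comm]
    rw [a_char, a_char, key, hsq]
    simp only [isSquare_sq_mul _ _ (pow_ne_zero α hp.pos.ne')]
  · -- Part (ii)
    intro n i hi1 hi2
    obtain ⟨t, ht⟩ := eight_dvd_pow p (α + 1) hodd
    have hP1 : 1 ≤ p ^ (2 * (α + 1)) := Nat.one_le_pow _ _ hp.pos
    have hpQ : p * p ^ (2 * α + 1) = 8 * t + 1 := by
      have h1 : p * p ^ (2 * α + 1) = p ^ (2 * (α + 1)) := by ring
      omega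
    have hX : (8 * i + p) * p ^ (2 * α + 1) = 8 * (i * p ^ (2 * α + 1) + t) + 1 := by
      have h2 : (8 * i + p) * p ^ (2 * α + 1)
          = 8 * (i * p ^ (2 * α + 1)) + p * p ^ (2 * α + 1) := by ring
      omega
    have key : 8 * (p ^ (2 * α + 2) * n + ((8 * i + p) * p ^ (2 * α + 1) - 1) / 8) + 1
        = p ^ (2 * α + 1) * (8 * (p * n) + (8 * i + p)) := by
      have hR : p ^ (2 * α + 1) * (8 * (p * n) + (8 * i + p))
          = 8 * (p ^ (2 * α + 2) * n) + (8 * i + p) * p ^ (2 * α + 1) := by ring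
      omega
    have hM : ¬ p ∣ (8 * (p * n) + (8 * i + p)) := by
      intro hd
      have hrw : 8 * (p * n) + (8 * i + p) = 8 * i + p * (8 * n + 1) := by ring
      rw [hrw] at hd
      have h2 : p ∣ p * (8 * n + 1) := dvd_mul_right _ _
      have h3 : p ∣ 8 * i := by
        have := Nat.dvd_sub hd h2
        simpa using this
      exact p_not_dvd_eight_mul p i hp hodd hi1 hi2 h3
    have hM0 : 0 < 8 * (p * n) + (8 * i + p) :=
      Nat.lt_of_lt_of_le hp.pos (by omega)
    rw [a_char, key,
      if_neg (not_isSquare_odd_val p hp (2 * α + 1) _ ⟨α, rfl⟩ hM hM0)]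
  · -- Part (iii)
    intro n j hj hjns
    obtain ⟨t, ht⟩ := eight_dvd_pow p α hodd
    have hP1 : 1 ≤ p ^ (2 * α) := Nat.one_le_pow _ _ hp.pos
    have hX : (8 * j + 1) * p ^ (2 * α) = 8 * (j * p ^ (2 * α) + t) + 1 := by
      have h2 : (8 * j + 1) * p ^ (2 * α) = 8 * (j * p ^ (2 * α)) + p ^ (2 * α) := by ring
      omega
    have key : 8 * (p ^ (2 * α + 1) * n + ((8 * j + 1) * p ^ (2 * α) - 1) / 8) + 1
        = p ^ (2 * α) * (8 * (p * n) + (8 * j + 1)) := by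
      have hR : p ^ (2 * α) * (8 * (p * n) + (8 * j + 1))
          = 8 * (p ^ (2 * α + 1) * n) + (8 * j + 1) * p ^ (2 * α) := by ring
      omega
    have hns : ¬ IsSquare (p ^ (2 * α) * (8 * (p * n) + (8 * j + 1))) := by
      have hsq : p ^ (2 * α) = (p ^ α) ^ 2 := by rw [← pow_mul, mul_comm]
      rw [hsq, isSquare_sq_mul _ _ (pow_ne_zero _ hp.pos.ne')]
      apply not_isSquare_of_zmod p
      have hcast : ((8 * (p * n) + (8 * j + 1) : ℕ) : ZMod p)
          = ((8 * j + 1 : ℕ) : ZMod p) := by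
        push_cast [ZMod.natCast_self]
        ring
      rw [hcast]
      exact hjns
    rw [a_char, key, if_neg hns]
end
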